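/- For all integers a₁ ≥ 2 and a₂, a₃, a₄ ≥ 2, one has |[2*(a₃−1), a₂, a₄, 2*(a₁−2)]| = |[2*(a₃−1), a₂, a₄, 2*(a₁−1)]| − (a₂a₃a₄ − a₂a₃ − a₃a₄ + a₄ − 1). -/

import Mathlib

/-- Hirzebruch–Jung numerator: |[]| = 1, |[n]| = n,
|[n₁, n₂, …]| = n₁·|[n₂, …]| − |[n₃, …]|. -/
def hj : List ℤ → ℤ
  | [] => 1
  | [n] => n
  | n :: m :: l => n * hj (m :: l) - hj l

/-! A block of `2`s contributes linearly: the sequence `k ↦ hj (2*k ++ l)` satisfies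
`f (k + 2) = 2 f (k + 1) - f k`, whose characteristic polynomial `(X - 1)²` has the double root `1`.
The numerators in the theorem are therefore polynomials in the two block lengths, and the
difference of the two sides is read off from the closed form. -/

lemma hj_replicate_two_append (x : ℤ) (r : List ℤ) :
    ∀ k : ℕ, hj (List.replicate k 2 ++ x :: r) = (k + 1) * hj (x :: r) - k * hj r
  | 0 => by simp
  | 1 => by simp [hj]
  | k + 2 => by
    have hk := hj_replicate_two_append x r k
    have hk₁ := hj_replicate_two_append x r (k + 1)
    simp only [List.replicate_succ, List.cons_append] at hk₁ ⊢
    rw [hj, hk₁, hk]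
    push_cast
    ring

lemma hj_replicate_two (m : ℕ) : hj (List.replicate m 2) = m + 1 := by
  cases m with
  | zero => simp [hj]
  | succ m =>
    rw [List.replicate_succ', hj_replicate_two_append]
    simp only [hj, mul_one, Nat.cast_add, Nat.cast_one]
    ring

lemma hj_cons_replicate_two (y : ℤ) : ∀ m : ℕ, hj (y :: List.replicate m 2) = y * (m + 1) - m
  | 0 => by simp [hj]
  | m + 1 => by
    rw [List.replicate_succ, hj, ← List.replicate_succ, hj_replicate_two, hj_replicate_two]
    push_cast
    ring

lemma hj_replicate_two_append_pair_append_replicate_two (x y : ℤ) (k m : ℕ) :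
    hj (List.replicate k 2 ++ [x, y] ++ List.replicate m 2) =
      (k + 1) * (x * (y * (m + 1) - m) - (m + 1)) - k * (y * (m + 1) - m) := by
  rw [List.append_assoc, List.cons_append, hj_replicate_two_append, List.cons_append,
    List.nil_append, hj, hj_cons_replicate_two, hj_replicate_two]

theorem hj_drop_last_two_general (a₁ a₂ a₃ a₄ : ℤ) (h₁ : 2 ≤ a₁) (h₃ : 2 ≤ a₃) :
    hj (List.replicate (a₃ - 1).toNat 2 ++ [a₂, a₄] ++ List.replicate (a₁ - 2).toNat 2) =
      hj (List.replicate (a₃ - 1).toNat 2 ++ [a₂, a₄] ++ List.replicate (a₁ - 1).toNat 2) -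
        (a₂ * a₃ * a₄ - a₂ * a₃ - a₃ * a₄ + a₄ - 1) := by
  simp only [hj_replicate_two_append_pair_append_replicate_two]
  rw [Int.toNat_of_nonneg (by omega : 0 ≤ a₃ - 1), Int.toNat_of_nonneg (by omega : 0 ≤ a₁ - 2),
    Int.toNat_of_nonneg (by omega : 0 ≤ a₁ - 1)]
  ring

theorem hj_drop_last_two (a₁ a₂ a₃ a₄ : ℤ) (h₁ : 2 ≤ a₁) (h₂ : 2 ≤ a₂) (h₃ : 2 ≤ a₃)
    (h₄ : 2 ≤ a₄) :
    hj (List.replicate (a₃ - 1).toNat 2 ++ [a₂, a₄] ++ List.replicate (a₁ - 2).toNat 2) =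
      hj (List.replicate (a₃ - 1).toNat 2 ++ [a₂, a₄] ++ List.replicate (a₁ - 1).toNat 2) -
        (a₂ * a₃ * a₄ - a₂ * a₃ - a₃ * a₄ + a₄ - 1) :=
  hj_drop_last_two_general a₁ a₂ a₃ a₄ h₁ h₃
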